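/- Suppose m divides r. Then a vector v ∈ (Z/mZ)^r whose components consist of r/m copies of each residue class 0, 1, ..., m−1 is admissible for the Lee norm, with ‖v‖ = (r/m)·(m²/4) if m is even and (r/m)·(m²−1)/4 if m is odd. -/
import Mathlib


/-- Lee weight of an element of `ZMod m`. -/
def leeWt (m : ℕ) (x : ZMod m) : ℕ := min x.val (m - x.val)

/-- Lee norm of a vector over `ZMod m`. -/
def leeNorm {m r : ℕ} (v : Fin r → ZMod m) : ℕ := ∑ i, leeWt m (v i)

/-- A vector is admissible if no translate by a multiple of the all-ones vector
has smaller Lee norm. -/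
def LeeAdmissible {m r : ℕ} (v : Fin r → ZMod m) : Prop :=
  ∀ x : ZMod m, leeNorm v ≤ leeNorm (fun i => v i + x)

lemma sum_min_range : ∀ m : ℕ, ∑ k ∈ Finset.range m, min k (m - k) = m ^ 2 / 4
  | 0 => by simp
  | 1 => by simp
  | (n+2) => by
      have ih := sum_min_range n
      have h1 : ∑ k ∈ Finset.range (n+2), min k (n+2-k)
          = ∑ k ∈ Finset.range (n+1), min (k+1) (n+2-(k+1)) := by
        rw [Finset.sum_range_succ']; simp
      have h2 : ∑ k ∈ Finset.range (n+1), min (k+1) (n+2-(k+1))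
          = (∑ k ∈ Finset.range n, min (k+1) (n+2-(k+1))) + 1 := by
        rw [Finset.sum_range_succ]; simp
      have h3 : ∀ k ∈ Finset.range n, min (k+1) (n+2-(k+1)) = min k (n-k) + 1 := by
        intro k hk
        have : k < n := Finset.mem_range.mp hk
        omega
      rw [h1, h2, Finset.sum_congr rfl h3, Finset.sum_add_distrib, ih]
      have hsq : (n+2)^2 = n^2 + 4*n + 4 := by ring
      have hn : ∑ _x ∈ Finset.range n, 1 = n := by simp
      rw [hn]
      omega

lemma sum_leeWt (m : ℕ) [NeZero m] :
    ∑ x : ZMod m, leeWt m x = m ^ 2 / 4 := by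
  rw [← sum_min_range m]
  apply Finset.sum_nbij' (i := fun x => (x : ZMod m).val)
    (j := fun k => (k : ZMod m))
  · intro x _
    exact Finset.mem_range.mpr (ZMod.val_lt x)
  · intro k _
    exact Finset.mem_univ _
  · intro x _
    exact ZMod.natCast_zmod_val x
  · intro k hk
    exact ZMod.val_natCast_of_lt (Finset.mem_range.mp hk)
  · intro x _
    rfl

lemma leeNorm_of_counts {m r : ℕ} [NeZero m] (w : Fin r → ZMod m)
    (hw : ∀ c : ZMod m, (Finset.univ.filter fun i => w i = c).card = r / m) :
    leeNorm w = r / m * (m ^ 2 / 4) := by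
  have hfib := Finset.sum_fiberwise_of_maps_to
    (s := (Finset.univ : Finset (Fin r))) (t := (Finset.univ : Finset (ZMod m)))
    (fun i _ => Finset.mem_univ (w i)) (fun i => leeWt m (w i))
  rw [leeNorm, ← hfib]
  have : ∀ c : ZMod m,
      ∑ i ∈ Finset.univ.filter fun i => w i = c, leeWt m (w i)
        = r / m * leeWt m c := by
    intro c
    rw [Finset.sum_congr rfl (fun i hi => by
      rw [(Finset.mem_filter.mp hi).2]), Finset.sum_const, hw c, smul_eq_mul]
  rw [Finset.sum_congr rfl (fun c _ => this c), ← Finset.mul_sum, sum_leeWt]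

theorem stmt_16 (m r : ℕ) [NeZero m] (hmr : m ∣ r) (v : Fin r → ZMod m)
    (hv : ∀ c : ZMod m, (Finset.univ.filter fun i => v i = c).card = r / m) :
    LeeAdmissible v ∧
      leeNorm v =
        if Even m then r / m * (m ^ 2 / 4) else r / m * ((m ^ 2 - 1) / 4) := by
  have key : ∀ x : ZMod m, leeNorm (fun i => v i + x) = r / m * (m ^ 2 / 4) := by
    intro x
    apply leeNorm_of_counts
    intro c
    rw [← hv (c - x)]
    congr 1
    ext i
    simp [eq_sub_iff_add_eq]
  have hv0 : leeNorm v = r / m * (m ^ 2 / 4) := leeNorm_of_counts v hv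
  constructor
  · intro x
    rw [hv0, key x]
  · rw [hv0]
    rcases Nat.even_or_odd m with he | ho
    · rw [if_pos he]
    · rw [if_neg (Nat.not_even_iff_odd.mpr ho)]
      obtain ⟨t, ht⟩ := ho
      subst ht
      congr 1
      have : (2*t+1)^2 = 4*(t^2+t) + 1 := by ring
      omega
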